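/- Let f : ℝ^d → ℝ be Lipschitz continuous with Lipschitz constant κ (with respect to the Euclidean norm), let x_1, …, x_n ∈ ℝ^d, and define the kernel matrix K ∈ ℝ^{n×n} by K_{p,q} = f(x_p − x_q). Let C_i ⊆ {1,…,n} be a cluster of radius at most R, i.e., there exists c ∈ ℝ^d with ‖x_p − c‖_2 ≤ R for all p ∈ C_i. Then for every positive integer r, there exists a matrix A ∈ ℝ^{n × |C_i|} of rank at most r with ‖K(:,C_i) − A‖_F ≤ 4 κ r^{−1/d} √(|C_i| · n) · R, where K(:,C_i) is the n × |C_i| submatrix of K consisting of the columns indexed by C_i. -/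

import Mathlib

/-!
Cover the cluster by a maximal `ε`-separated subset `N` of it, with `ε = 4 r^(-1/d) R` (if
`4 r^(-1/d) ≥ 1` the single center `c` already does). The balls of radius `ε/2` around `N` are
disjoint and lie in a ball of radius `R + ε/2 ≤ 2R`, so comparing volumes gives `|N| ≤ r`.
Replacing each column `q` of `K(:,C)` by the kernel column at a point `u ∈ N` with
`‖x_q - u‖ ≤ ε` changes every entry by at most `κ ε` (shift invariance and the Lipschitz bound),
and the resulting matrix only has the `|N|` distinct columns `p ↦ f(x_p - u)`, so its rank is at
most `r`.
-/

open scoped NNReal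

/-- Frobenius norm of a real matrix. -/
noncomputable def frobNorm {m n : Type*} [Fintype m] [Fintype n]
    (M : Matrix m n ℝ) : ℝ :=
  Real.sqrt (∑ i, ∑ j, (M i j) ^ 2)

open scoped ENNReal

open Metric MeasureTheory Module

section Packing

variable {E : Type*} [NormedAddCommGroup E] [NormedSpace ℝ E] [FiniteDimensional ℝ E]

theorem Metric.IsSeparated.card_mul_pow_le_of_subset_closedBall {N : Finset E} {ε : ℝ≥0}
    (hN : IsSeparated ε (N : Set E)) (hε : 0 < ε) {c : E} {R : ℝ} (hR : 0 ≤ R)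
    (hNc : (N : Set E) ⊆ closedBall c R) :
    N.card * ((ε : ℝ) / 2) ^ finrank ℝ E ≤ (R + ε / 2) ^ finrank ℝ E := by
  borelize E
  set μ : Measure E := Measure.addHaar
  have hε₂ : 0 < (ε : ℝ) / 2 := by positivity
  have hdisj : (N : Set E).PairwiseDisjoint (fun u => ball u (ε / 2)) := by
    intro u hu v hv huv
    refine ball_disjoint_ball ?_
    have : (ε : ℝ≥0∞) < edist u v := hN hu hv huv
    rw [edist_nndist, ENNReal.coe_lt_coe, ← NNReal.coe_lt_coe, coe_nndist] at this
    linarith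
  have hsub : (⋃ u ∈ N, ball u (ε / 2 : ℝ)) ⊆ ball c (R + ε / 2) := by
    simp only [Set.iUnion_subset_iff]
    intro u hu y hy
    have := hNc hu
    rw [mem_closedBall] at this
    rw [mem_ball] at hy ⊢
    linarith [dist_triangle y u c]
  have hvol : N.card * μ (ball (0 : E) 1) * ENNReal.ofReal (((ε : ℝ) / 2) ^ finrank ℝ E) ≤
      ENNReal.ofReal ((R + ε / 2) ^ finrank ℝ E) * μ (ball 0 1) := by
    calc N.card * μ (ball (0 : E) 1) * ENNReal.ofReal (((ε : ℝ) / 2) ^ finrank ℝ E)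
        = ∑ u ∈ N, μ (ball u (ε / 2)) := by
          simp only [Measure.addHaar_ball_of_pos μ _ hε₂, Finset.sum_const, nsmul_eq_mul]
          ring
      _ = μ (⋃ u ∈ N, ball u (ε / 2)) :=
          (measure_biUnion_finset hdisj fun _ _ => measurableSet_ball).symm
      _ ≤ μ (ball c (R + ε / 2)) := measure_mono hsub
      _ = _ := Measure.addHaar_ball_of_pos μ _ (by positivity)
  rw [mul_comm _ (μ _), mul_assoc, mul_comm (μ _), ENNReal.mul_le_mul_iff_left
    (measure_ball_pos μ _ one_pos).ne' measure_ball_lt_top.ne] at hvol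
  rwa [← ENNReal.ofReal_natCast, ← ENNReal.ofReal_mul (by positivity),
    ENNReal.ofReal_le_ofReal_iff (by positivity)] at hvol

theorem exists_finset_isCover_card_mul_pow_le (S : Finset E) {c : E} {R : ℝ} (hR : 0 ≤ R)
    (hS : (S : Set E) ⊆ closedBall c R) {ε : ℝ≥0} (hε : 0 < ε) :
    ∃ N : Finset E, N.card * ((ε : ℝ) / 2) ^ finrank ℝ E ≤ (R + ε / 2) ^ finrank ℝ E ∧
      IsCover ε (S : Set E) (N : Set E) := by
  have hpack : packingNumber ε (S : Set E) ≠ ⊤ :=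
    ne_top_of_le_ne_top S.finite_toSet.encard_lt_top.ne (packingNumber_le_encard_self _)
  have hfin : (maximalSeparatedSet ε (S : Set E)).Finite :=
    S.finite_toSet.subset maximalSeparatedSet_subset
  refine ⟨hfin.toFinset, ?_, by simpa using isCover_maximalSeparatedSet hpack⟩
  exact IsSeparated.card_mul_pow_le_of_subset_closedBall
    (by simpa using isSeparated_maximalSeparatedSet) hε hR
    (by simpa using maximalSeparatedSet_subset.trans hS)

theorem Real.rpow_neg_one_div_natCast_pow_mul_self {r : ℝ} (hr : 0 < r) {d : ℕ} (hd : d ≠ 0) :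
    (r ^ (-(1 : ℝ) / d)) ^ d * r = 1 := by
  rw [← Real.rpow_natCast, ← Real.rpow_mul hr.le, div_mul_cancel₀ _ (by exact_mod_cast hd),
    Real.rpow_neg_one, inv_mul_cancel₀ hr.ne']

theorem exists_finset_card_le_forall_dist_le (S : Finset E) {c : E} {R : ℝ}
    (hS : (S : Set E) ⊆ closedBall c R) {r : ℕ} (hr : 0 < r) :
    ∃ N : Finset E, N.card ≤ r ∧
      ∀ s ∈ S, ∃ u ∈ N, dist s u ≤ 4 * (r : ℝ) ^ (-(1 : ℝ) / finrank ℝ E) * R := by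
  set d := finrank ℝ E
  set t := (r : ℝ) ^ (-(1 : ℝ) / d)
  have hr' : (0 : ℝ) < r := by exact_mod_cast hr
  have ht : 0 < t := Real.rpow_pos_of_pos hr' _
  by_cases htriv : 1 ≤ 4 * t ∨ R ≤ 0
  · refine ⟨{c}, by simpa using Nat.one_le_iff_ne_zero.mpr hr.ne', fun s hs =>
      ⟨c, Finset.mem_singleton_self c, ?_⟩⟩
    have := mem_closedBall.mp (hS hs)
    rcases htriv with h | h <;> nlinarith [dist_nonneg (x := s) (y := c)]
  push Not at htriv
  obtain ⟨htr, hR⟩ := htriv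
  have hd : d ≠ 0 := by
    rintro hd
    simp [t, hd] at htr
  obtain ⟨ε, hε⟩ : ∃ ε : ℝ≥0, (ε : ℝ) = 4 * t * R := ⟨⟨4 * t * R, by positivity⟩, rfl⟩
  obtain ⟨N, hcard, hcov⟩ := exists_finset_isCover_card_mul_pow_le S hR.le hS (ε := ε)
    (by rw [← NNReal.coe_pos, hε]; positivity)
  rw [hε, show 4 * t * R / 2 = 2 * t * R by ring] at hcard
  refine ⟨N, ?_, fun s hs => ?_⟩
  · have h2tR : 0 < (2 * t * R) ^ d := by positivity
    have : (N.card : ℝ) * (2 * t * R) ^ d ≤ r * (2 * t * R) ^ d := calc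
      _ ≤ (R + 2 * t * R) ^ d := hcard
      _ ≤ (2 * R) ^ d := by gcongr; nlinarith
      _ = (2 * R) ^ d * (t ^ d * r) := by
        rw [Real.rpow_neg_one_div_natCast_pow_mul_self hr' hd, mul_one]
      _ = r * (2 * t * R) ^ d := by ring
    exact_mod_cast le_of_mul_le_mul_right this h2tR
  · obtain ⟨u, hu, hsu⟩ := hcov hs
    refine ⟨u, hu, ?_⟩
    have : nndist s u ≤ ε := edist_le_coe.mp hsu
    rwa [← NNReal.coe_le_coe, coe_nndist, hε] at this

end Packing

theorem frobNorm_le_of_forall_abs_le {m n : Type*} [Fintype m] [Fintype n] (M : Matrix m n ℝ)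
    {b : ℝ} (hM : ∀ i j, |M i j| ≤ b) :
    frobNorm M ≤ √(Fintype.card m * Fintype.card n) * b := by
  rcases isEmpty_or_nonempty m with hm | ⟨⟨i⟩⟩
  · simp [frobNorm]
  rcases isEmpty_or_nonempty n with hn | ⟨⟨j⟩⟩
  · simp [frobNorm]
  have hb : 0 ≤ b := (abs_nonneg _).trans (hM i j)
  calc frobNorm M ≤ √(∑ _i : m, ∑ _j : n, b ^ 2) :=
        Real.sqrt_le_sqrt <| Finset.sum_le_sum fun i _ => Finset.sum_le_sum fun j _ =>
          sq_le_sq' (abs_le.mp (hM i j)).1 (abs_le.mp (hM i j)).2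
    _ = √(Fintype.card m * Fintype.card n) * b := by
      simp only [Finset.sum_const, Finset.card_univ, nsmul_eq_mul, ← mul_assoc]
      rw [Real.sqrt_mul (by positivity), Real.sqrt_sq hb]

/-- Low-rank approximation of the column-submatrix `K(:,C)` of a shift-invariant
kernel matrix, for a cluster `C` of radius at most `R`. -/
theorem bbf_column_submatrix_low_rank_approx
    (d n : ℕ) (κ : ℝ≥0) (f : EuclideanSpace ℝ (Fin d) → ℝ)
    (hf : LipschitzWith κ f)
    (x : Fin n → EuclideanSpace ℝ (Fin d))
    (K : Matrix (Fin n) (Fin n) ℝ)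
    (hK : ∀ p q, K p q = f (x p - x q))
    (C : Finset (Fin n)) (R : ℝ) (c : EuclideanSpace ℝ (Fin d))
    (hC : ∀ p ∈ C, ‖x p - c‖ ≤ R)
    (r : ℕ) (hr : 0 < r) :
    ∃ A : Matrix (Fin n) {p // p ∈ C} ℝ,
      A.rank ≤ r ∧
      frobNorm (K.submatrix id (fun q : {p // p ∈ C} => q.1) - A) ≤
        4 * (κ : ℝ) * (r : ℝ) ^ (-(1 : ℝ) / d) * Real.sqrt (C.card * n) * R := by
  classical
  obtain ⟨N, hNr, hN⟩ := exists_finset_card_le_forall_dist_le (C.image x) (c := c) (R := R)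
    (by simpa [Set.subset_def, dist_eq_norm] using hC) hr
  rw [finrank_euclideanSpace_fin] at hN
  choose σ hσN hσ using fun q : C => hN (x q) (Finset.mem_image_of_mem x q.2)
  let B : Matrix (Fin n) N ℝ := Matrix.of fun p u => f (x p - u)
  refine ⟨B.submatrix id fun q => ⟨σ q, hσN q⟩, ?_, ?_⟩
  · calc _ ≤ B.rank := Matrix.rank_submatrix_le _ _ _
      _ ≤ Fintype.card N := B.rank_le_card_width
      _ ≤ r := by simpa using hNr
  · refine (frobNorm_le_of_forall_abs_le _ (b := κ * (4 * (r : ℝ) ^ (-(1 : ℝ) / d) * R))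
      fun p q => ?_).trans_eq
      (by rw [Fintype.card_coe, Fintype.card_fin, mul_comm (n : ℝ)]; ring)
    simp only [Matrix.sub_apply, Matrix.submatrix_apply, id, B, Matrix.of_apply, hK]
    calc |f (x p - x q) - f (x p - σ q)| ≤ κ * dist (x q) (σ q) := by
          rw [← Real.dist_eq, ← dist_sub_left (x p)]; exact hf.dist_le_mul _ _
      _ ≤ _ := by gcongr; exact hσ q
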